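/- Let h_1, …, h_t ∈ ℝ^d generate a dense additive subgroup of ℝ^d, let n_1, …, n_t be natural numbers, and let f : ℝ^d → ℝ be a continuous function satisfying Δ_{h_k}^{n_k+1} f(x) = 0 for all x ∈ ℝ^d and all k = 1, …, t. Then f is an ordinary polynomial of total degree at most N = n_1 + n_2 + ⋯ + n_t + t − 1. -/

import Mathlib

/-- The forward difference operator: `(Δ_h f)(x) = f(x + h) - f(x)`. -/
def fdiff {G M : Type*} [Add G] [Sub M] (h : G) (f : G → M) : G → M :=
  fun x => f (x + h) - f x

/-!
With `S_a` the shift by `a`, the operators `Δ_a = S_a - 1` commute, and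
`Δ_{a+b} = Δ_a + S_a Δ_b`, `Δ_{-a} = -S_{-a} Δ_a`, `Δ_{ka} = (1 + S_a + ⋯ + S_a^{k-1}) Δ_a`.
So the exponents `m` with `Δ_a^m f = 0` behave like nilpotency indices of commuting elements, and
`Δ_s^{n₁ + ⋯ + n_t + 1} f = 0` for every `s` in the group generated by the `h_k`; by continuity
and density this holds for every `s ∈ ℝ^d`. On `ℝ`, Gregory–Newton makes such an `f` a polynomial
of degree `≤ N` along every arithmetic progression, so it agrees with its interpolant at
`0, …, N` on `ℚ`, hence everywhere. Lagrange interpolation in the first coordinate and induction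
on `d` give a polynomial in `d` variables, and restricting it to lines through the origin shows
that its homogeneous components of degree `> N` vanish.
-/

open Finset Function fwdDiff_aux
open scoped fwdDiff Polynomial

theorem Commute.mul_pow_smul_eq_zero {R V : Type*} [Monoid R] [AddMonoid V]
    [DistribMulAction R V] {u x : R} (hux : Commute u x) {v : V} {m : ℕ} (hx : x ^ m • v = 0) :
    (u * x) ^ m • v = 0 := by
  rw [hux.mul_pow, mul_smul, hx, smul_zero]

theorem Commute.add_pow_smul_eq_zero {R V : Type*} [Semiring R] [AddCommMonoid V] [Module R V]
    {x y : R} (hxy : Commute x y) {v : V} {m n k : ℕ} (hx : x ^ m • v = 0) (hy : y ^ n • v = 0)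
    (hk : m + n ≤ k + 1) : (x + y) ^ k • v = 0 := by
  rw [hxy.add_pow, sum_smul]
  refine sum_eq_zero fun i hi => ?_
  have hik : i ≤ k := Nat.lt_succ_iff.mp (mem_range.mp hi)
  rcases le_or_gt m i with hmi | hmi
  · have hterm : x ^ i * y ^ (k - i) * k.choose i =
        (k.choose i * y ^ (k - i) * x ^ (i - m)) * x ^ m := by
      rw [← (Nat.cast_commute _ _).eq, (hxy.pow_pow i (k - i)).eq, ← pow_sub_mul_pow x hmi]
      simp only [mul_assoc]
    rw [hterm, mul_smul, hx, smul_zero]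
  · have hterm : x ^ i * y ^ (k - i) * k.choose i =
        (k.choose i * x ^ i * y ^ (k - i - n)) * y ^ n := by
      rw [← (Nat.cast_commute _ _).eq, ← pow_sub_mul_pow y (by omega : n ≤ k - i)]
      simp only [mul_assoc]
    rw [hterm, mul_smul, hy, smul_zero]

namespace fwdDiff_aux

variable {M G : Type*} [AddCommGroup G]

section AddCommMonoid

variable [AddCommMonoid M]

theorem shiftₗ_add (a b : M) : shiftₗ M G (a + b) = shiftₗ M G a * shiftₗ M G b := by
  ext f y
  simp [shiftₗ_apply, add_assoc]

theorem shiftₗ_zero : shiftₗ M G (0 : M) = 1 := by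
  ext f y
  simp [shiftₗ_apply]

theorem shiftₗ_nsmul (k : ℕ) (a : M) : shiftₗ M G (k • a) = shiftₗ M G a ^ k := by
  ext f y
  simp [shiftₗ_apply, shiftₗ_pow_apply]

theorem commute_shiftₗ (a b : M) : Commute (shiftₗ M G a) (shiftₗ M G b) := by
  rw [Commute, SemiconjBy, ← shiftₗ_add, ← shiftₗ_add, add_comm]

theorem fwdDiffₗ_eq_shiftₗ_sub_one (a : M) : fwdDiffₗ M G a = shiftₗ M G a - 1 :=
  (add_sub_cancel_right _ _).symm

theorem commute_shiftₗ_fwdDiffₗ (a b : M) : Commute (shiftₗ M G a) (fwdDiffₗ M G b) := by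
  rw [fwdDiffₗ_eq_shiftₗ_sub_one]
  exact (commute_shiftₗ a b).sub_right (Commute.one_right _)

theorem commute_fwdDiffₗ (a b : M) : Commute (fwdDiffₗ M G a) (fwdDiffₗ M G b) := by
  rw [fwdDiffₗ_eq_shiftₗ_sub_one a]
  exact (commute_shiftₗ_fwdDiffₗ a b).sub_left (Commute.one_left _)

theorem fwdDiffₗ_add (a b : M) :
    fwdDiffₗ M G (a + b) = fwdDiffₗ M G a + shiftₗ M G a * fwdDiffₗ M G b := by
  simp only [fwdDiffₗ_eq_shiftₗ_sub_one, shiftₗ_add]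
  noncomm_ring

theorem fwdDiffₗ_nsmul (k : ℕ) (a : M) :
    fwdDiffₗ M G (k • a) = (∑ i ∈ range k, shiftₗ M G a ^ i) * fwdDiffₗ M G a := by
  rw [fwdDiffₗ_eq_shiftₗ_sub_one, fwdDiffₗ_eq_shiftₗ_sub_one, geom_sum_mul, shiftₗ_nsmul]

theorem fwdDiffₗ_pow_smul (a : M) (m : ℕ) (f : M → G) :
    fwdDiffₗ M G a ^ m • f = Δ_[a] ^[m] f :=
  congrFun (coe_fwdDiffₗ_pow a m) f

end AddCommMonoid

theorem fwdDiffₗ_neg [AddCommGroup M] (a : M) :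
    fwdDiffₗ M G (-a) = -shiftₗ M G (-a) * fwdDiffₗ M G a := by
  rw [fwdDiffₗ_eq_shiftₗ_sub_one, fwdDiffₗ_eq_shiftₗ_sub_one, neg_mul, mul_sub, ← shiftₗ_add,
    neg_add_cancel, shiftₗ_zero, mul_one, neg_sub]

end fwdDiff_aux

section Annihilation

variable {M G : Type*} [AddCommGroup G]

section AddCommMonoid

variable [AddCommMonoid M] {f : M → G}

theorem fwdDiff_iter_eq_zero_of_le {a : M} {m n : ℕ} (hmn : m ≤ n) (h : Δ_[a] ^[m] f = 0) :
    Δ_[a] ^[n] f = 0 := by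
  rw [← fwdDiffₗ_pow_smul] at h ⊢
  rw [← pow_sub_mul_pow _ hmn, mul_smul, h, smul_zero]

theorem fwdDiff_iter_add_eq_zero {a b : M} {m n k : ℕ} (ha : Δ_[a] ^[m] f = 0)
    (hb : Δ_[b] ^[n] f = 0) (hk : m + n ≤ k + 1) : Δ_[a + b] ^[k] f = 0 := by
  rw [← fwdDiffₗ_pow_smul] at ha hb ⊢
  rw [fwdDiffₗ_add]
  have hcomm : Commute (fwdDiffₗ M G a) (shiftₗ M G a * fwdDiffₗ M G b) :=
    (commute_shiftₗ_fwdDiffₗ a a).symm.mul_right (commute_fwdDiffₗ a b)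
  exact hcomm.add_pow_smul_eq_zero ha ((commute_shiftₗ_fwdDiffₗ a b).mul_pow_smul_eq_zero hb) hk

theorem fwdDiff_iter_nsmul_eq_zero {a : M} {m : ℕ} (k : ℕ) (h : Δ_[a] ^[m] f = 0) :
    Δ_[k • a] ^[m] f = 0 := by
  rw [← fwdDiffₗ_pow_smul] at h ⊢
  rw [fwdDiffₗ_nsmul]
  have hcomm : Commute (∑ i ∈ range k, shiftₗ M G a ^ i) (fwdDiffₗ M G a) :=
    Commute.sum_left _ _ _ fun i _ => (commute_shiftₗ_fwdDiffₗ a a).pow_left i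
  exact hcomm.mul_pow_smul_eq_zero h

theorem shift_eq_sum_fwdDiff_iter_of_fwdDiff_iter_eq_zero {a : M} {N : ℕ}
    (h : Δ_[a] ^[N + 1] f = 0) (y : M) (k : ℕ) :
    f (y + k • a) = ∑ j ∈ range (N + 1), k.choose j • Δ_[a] ^[j] f y := by
  rw [shift_eq_sum_fwdDiff_iter a f k y]
  calc ∑ j ∈ range (k + 1), k.choose j • Δ_[a] ^[j] f y
      = ∑ j ∈ range (k + N + 1), k.choose j • Δ_[a] ^[j] f y := by
        refine sum_subset (range_subset_range.mpr (by omega)) fun j _ hj => ?_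
        rw [Nat.choose_eq_zero_of_lt (by simpa using hj), zero_smul]
    _ = ∑ j ∈ range (N + 1), k.choose j • Δ_[a] ^[j] f y := by
        refine (sum_subset (range_subset_range.mpr (by omega)) fun j _ hj => ?_).symm
        rw [fwdDiff_iter_eq_zero_of_le (by simpa using hj) h, Pi.zero_apply, smul_zero]

theorem fwdDiff_iter_comp {M' : Type*} [AddCommMonoid M'] {T : M' → M} {b : M'} {a : M}
    (hT : ∀ x, T (x + b) = T x + a) (f : M → G) (m : ℕ) :
    Δ_[b] ^[m] (f ∘ T) = Δ_[a] ^[m] f ∘ T := by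
  induction m with
  | zero => rfl
  | succ m ih =>
    rw [iterate_succ_apply', ih, iterate_succ_apply']
    ext x
    simp [fwdDiff, hT]

theorem fwdDiff_iter_comp_eq_zero {M' : Type*} [AddCommMonoid M'] {T : M' → M} {b : M'} {a : M}
    (hT : ∀ x, T (x + b) = T x + a) {m : ℕ} (h : Δ_[a] ^[m] f = 0) :
    Δ_[b] ^[m] (f ∘ T) = 0 := by
  rw [fwdDiff_iter_comp hT, h]
  rfl

end AddCommMonoid

variable [AddCommGroup M] {f : M → G}

theorem fwdDiff_iter_neg_eq_zero {a : M} {m : ℕ} (h : Δ_[a] ^[m] f = 0) :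
    Δ_[-a] ^[m] f = 0 := by
  rw [← fwdDiffₗ_pow_smul] at h ⊢
  rw [fwdDiffₗ_neg]
  exact (commute_shiftₗ_fwdDiffₗ (G := G) (-a) a).neg_left.mul_pow_smul_eq_zero h

theorem fwdDiff_iter_zsmul_eq_zero {a : M} {m : ℕ} (c : ℤ) (h : Δ_[a] ^[m] f = 0) :
    Δ_[c • a] ^[m] f = 0 := by
  obtain ⟨k, rfl | rfl⟩ := c.eq_nat_or_neg
  · rw [natCast_zsmul]
    exact fwdDiff_iter_nsmul_eq_zero k h
  · rw [neg_zsmul, natCast_zsmul]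
    exact fwdDiff_iter_neg_eq_zero (fwdDiff_iter_nsmul_eq_zero k h)

theorem fwdDiff_iter_sum_eq_zero {ι : Type*} (s : Finset ι) {a : ι → M} {n : ι → ℕ}
    (h : ∀ i ∈ s, Δ_[a i] ^[n i + 1] f = 0) :
    Δ_[∑ i ∈ s, a i] ^[∑ i ∈ s, n i + 1] f = 0 := by
  classical
  induction s using Finset.induction_on with
  | empty => ext x; simp [fwdDiff]
  | insert i s hi ih =>
    rw [sum_insert hi, sum_insert hi]
    exact fwdDiff_iter_add_eq_zero (h i (mem_insert_self i s))
      (ih fun j hj => h j (mem_insert_of_mem hj)) (by omega)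

theorem fwdDiff_iter_eq_zero_of_mem_closure {ι : Type*} [Fintype ι] {a : ι → M} {n : ι → ℕ}
    (h : ∀ i, Δ_[a i] ^[n i + 1] f = 0) {s : M} (hs : s ∈ AddSubgroup.closure (Set.range a)) :
    Δ_[s] ^[∑ i, n i + 1] f = 0 := by
  obtain ⟨c, rfl⟩ := AddSubgroup.exists_of_mem_closure_range a s hs
  exact fwdDiff_iter_sum_eq_zero _ fun i _ => fwdDiff_iter_zsmul_eq_zero (c i) (h i)

end Annihilation

section Topology

variable {M G : Type*} [AddCommMonoid M] [TopologicalSpace M] [ContinuousAdd M]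
  [AddCommGroup G] [TopologicalSpace G] [IsTopologicalAddGroup G] {f : M → G}

theorem Continuous.fwdDiff_iter_apply_step (hf : Continuous f) (m : ℕ) (x : M) :
    Continuous fun s => Δ_[s] ^[m] f x := by
  simp only [fwdDiff_iter_eq_sum_shift]
  fun_prop

theorem fwdDiff_iter_eq_zero_of_dense [T2Space G] {S : Set M} (hS : Dense S)
    (hf : Continuous f) {m : ℕ} (h : ∀ s ∈ S, Δ_[s] ^[m] f = 0) (s : M) : Δ_[s] ^[m] f = 0 :=
  funext fun x => congrFun (Continuous.ext_on hS (hf.fwdDiff_iter_apply_step m x)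
    continuous_const fun s hs => congrFun (h s hs) x) s

end Topology

section Sequences

open Polynomial

variable {K : Type*} [Field K] [CharZero K] {N : ℕ}

theorem exists_natDegree_le_eval_eq_of_fwdDiff_iter_eq_zero {a : ℕ → K}
    (h : Δ_[1] ^[N + 1] a = 0) :
    ∃ q : K[X], q.natDegree ≤ N ∧ ∀ k : ℕ, a k = q.eval (k : K) := by
  refine ⟨∑ j ∈ range (N + 1), C (Δ_[1] ^[j] a 0 / j.factorial) * descPochhammer K j,
    natDegree_sum_le_of_forall_le _ _ fun j hj => ?_, fun k => ?_⟩
  · refine natDegree_C_mul_le _ _ |>.trans ?_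
    rw [descPochhammer_natDegree]
    exact Nat.lt_succ_iff.mp (mem_range.mp hj)
  · have hk := shift_eq_sum_fwdDiff_iter_of_fwdDiff_iter_eq_zero h 0 k
    rw [zero_add, smul_eq_mul, mul_one] at hk
    rw [hk, eval_finsetSum]
    refine sum_congr rfl fun j _ => ?_
    rw [nsmul_eq_mul, eval_mul, eval_C, descPochhammer_eval_eq_descFactorial,
      Nat.descFactorial_eq_factorial_mul_choose, Nat.cast_mul]
    have : (j.factorial : K) ≠ 0 := Nat.cast_ne_zero.mpr j.factorial_ne_zero
    field_simp

theorem eq_eval_on_progression_of_fwdDiff_iter_eq_zero {g : K → K} {u : K}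
    (hg : Δ_[u] ^[N + 1] g = 0) (x₀ : K) {p : K[X]} (hp : p.natDegree ≤ N) {S : Finset ℕ}
    (hS : N < #S) (hgp : ∀ k ∈ S, g (x₀ + k * u) = p.eval (x₀ + k * u)) (k : ℕ) :
    g (x₀ + k * u) = p.eval (x₀ + k * u) := by
  classical
  have hline : ∀ k : ℕ, (C u * X + C x₀).eval (k : K) = x₀ + k * u := fun k => by
    simp only [eval_add, eval_mul, eval_C, eval_X]
    ring
  obtain ⟨q, hq, hgq⟩ := exists_natDegree_le_eval_eq_of_fwdDiff_iter_eq_zero (N := N)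
    (a := g ∘ fun k : ℕ => x₀ + k * u) (fwdDiff_iter_comp_eq_zero (fun k => by push_cast; ring) hg)
  replace hgq : ∀ k : ℕ, g (x₀ + k * u) = q.eval (k : K) := hgq
  have hqp : q = p.comp (C u * X + C x₀) := by
    refine eq_of_natDegree_lt_card_of_eval_eq' _ _ (S.image Nat.cast) (fun _ hx => ?_) ?_
    · obtain ⟨k, hk, rfl⟩ := mem_image.mp hx
      rw [← hgq, hgp k hk, eval_comp, hline]
    · rw [card_image_of_injective _ Nat.cast_injective]
      refine max_lt (hq.trans_lt hS) ((natDegree_comp_le.trans ?_).trans_lt hS)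
      simpa using Nat.mul_le_mul hp (natDegree_linear_le (a := u) (b := x₀))
  rw [hgq, hqp, eval_comp, hline]

end Sequences

open Polynomial in
theorem eq_eval_interpolate_of_fwdDiff_iter_eq_zero {N : ℕ} {g : ℝ → ℝ} (hg : Continuous g)
    (hΔ : ∀ u, Δ_[u] ^[N + 1] g = 0) (x : ℝ) :
    g x = (Lagrange.interpolate (range (N + 1)) (↑) fun k : ℕ => g k).eval x := by
  set p := Lagrange.interpolate (range (N + 1)) ((↑) : ℕ → ℝ) fun k : ℕ => g k
  have hinj : Set.InjOn ((↑) : ℕ → ℝ) (range (N + 1)) := Nat.cast_injective.injOn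
  have hp : p.natDegree ≤ N := by
    have := Lagrange.degree_interpolate_le (r := fun k : ℕ => g k) hinj
    rwa [card_range, Nat.add_sub_cancel, ← natDegree_le_iff_degree_le] at this
  have hrat : ∀ r : ℚ, g r = p.eval (r : ℝ) := by
    intro r
    have hb : (r.den : ℝ) ≠ 0 := by positivity
    -- the progression `(k - M) / den r` meets the nodes `0, …, N` at `k = M + j den r`, and `r`
    set M := r.num.natAbs
    have hshift : Injective fun j => M + j * r.den := fun i j hij =>
      Nat.eq_of_mul_eq_mul_right r.den_pos (Nat.add_left_cancel hij)
    have hgrid := eq_eval_on_progression_of_fwdDiff_iter_eq_zero (hΔ (r.den : ℝ)⁻¹) (-M / r.den)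
      hp (S := (range (N + 1)).image fun j => M + j * r.den)
      (by rw [card_image_of_injective _ hshift, card_range]; omega) ?_ (r.num + M).toNat
    · have hnum : (((r.num + M).toNat : ℕ) : ℝ) = r.num + M := by
        exact_mod_cast Int.toNat_of_nonneg (by omega)
      have hr : -(M : ℝ) / r.den + (((r.num + M).toNat : ℕ) : ℝ) * (r.den : ℝ)⁻¹ = r := by
        rw [hnum, Rat.cast_def]
        field_simp
        ring
      rwa [hr] at hgrid
    · intro k hk
      obtain ⟨j, hj, rfl⟩ := mem_image.mp hk
      have : -(M : ℝ) / r.den + ((M + j * r.den : ℕ) : ℝ) * (r.den : ℝ)⁻¹ = j := by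
        push_cast
        field_simp
        ring
      rw [this]
      exact (Lagrange.eval_interpolate_at_node (fun k : ℕ => g k) hinj hj).symm
  exact congrFun (Continuous.ext_on Rat.denseRange_cast hg p.continuous
    fun _ ⟨r, hr⟩ => hr ▸ hrat r) x

theorem Fin.cons_add_cons {α : Type*} [Add α] {n : ℕ} (x y : α) (v w : Fin n → α) :
    (Fin.cons x v : Fin (n + 1) → α) + Fin.cons y w = Fin.cons (x + y) (v + w) :=
  Matrix.cons_add_cons x v y w

theorem exists_mvPolynomial_eval_eq_of_fwdDiff_iter_eq_zero {N d : ℕ} {f : (Fin d → ℝ) → ℝ}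
    (hf : Continuous f) (hΔ : ∀ s, Δ_[s] ^[N + 1] f = 0) :
    ∃ P : MvPolynomial (Fin d) ℝ, ∀ x, f x = MvPolynomial.eval x P := by
  induction d with
  | zero =>
    exact ⟨MvPolynomial.C (f 0), fun x => by rw [MvPolynomial.eval_C, Subsingleton.elim x 0]⟩
  | succ d ih =>
    have hslice (c : ℝ) :
        ∃ P : MvPolynomial (Fin d) ℝ, ∀ z, f (Fin.cons c z) = MvPolynomial.eval z P :=
      ih (hf.comp (by fun_prop)) fun s => fwdDiff_iter_comp_eq_zero (a := Fin.cons 0 s)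
        (fun z => by rw [Fin.cons_add_cons, add_zero]) (hΔ _)
    choose P hP using fun k : ℕ => hslice k
    have hline (z : Fin d → ℝ) := eq_eval_interpolate_of_fwdDiff_iter_eq_zero
      (g := fun t => f (Fin.cons t z)) (hf.comp (by fun_prop)) fun u =>
        fwdDiff_iter_comp_eq_zero (a := Fin.cons u 0)
          (fun t => by rw [Fin.cons_add_cons, add_zero]) (hΔ _)
    refine ⟨∑ k ∈ range (N + 1),
      (Lagrange.basis (range (N + 1)) ((↑) : ℕ → ℝ) k).toMvPolynomial 0 *
        MvPolynomial.rename Fin.succ (P k), fun x => ?_⟩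
    rw [← Fin.cons_self_tail x, hline, Lagrange.interpolate_apply, Polynomial.eval_finsetSum,
      map_sum]
    refine sum_congr rfl fun k _ => ?_
    rw [Polynomial.eval_mul, Polynomial.eval_C, map_mul, MvPolynomial.eval_toMvPolynomial,
      MvPolynomial.eval_rename, hP, mul_comm]
    rfl

theorem Polynomial.natDegree_le_of_fwdDiff_iter_eq_zero {R : Type*} [CommRing R] [IsDomain R]
    [CharZero R] {P : R[X]} {N : ℕ} (h : Δ_[1] ^[N + 1] P.eval = 0) : P.natDegree ≤ N := by
  by_contra! hlt
  have hfac := congrFun P.fwdDiff_iter_degree_eq_factorial 0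
  rw [fwdDiff_iter_eq_zero_of_le hlt h] at hfac
  have hlc : P.leadingCoeff = 0 := by simpa [Nat.factorial_ne_zero] using hfac.symm
  simp [Polynomial.leadingCoeff_eq_zero.mp hlc] at hlt

namespace MvPolynomial

variable {σ R : Type*} [CommRing R]

theorem IsHomogeneous.eval_smul [Fintype σ] {φ : MvPolynomial σ R} {n : ℕ}
    (hφ : φ.IsHomogeneous n) (t : R) (v : σ → R) : eval (t • v) φ = t ^ n * eval v φ := by
  rw [eval_eq', eval_eq', mul_sum]
  refine sum_congr rfl fun d hd => ?_
  have hdeg : ∑ i, d i = n := by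
    rw [← Finsupp.degree_eq_sum, Finsupp.degree_eq_weight_one]
    exact hφ (mem_support_iff.mp hd)
  simp only [Pi.smul_apply, smul_eq_mul, mul_pow, prod_mul_distrib, prod_pow_eq_pow_sum, hdeg]
  ring

theorem exists_polynomial_eval_smul_eq [Fintype σ] (P : MvPolynomial σ R) (v : σ → R) :
    ∃ A : R[X], (∀ t, A.eval t = eval (t • v) P) ∧
      ∀ i, A.coeff i = eval v (homogeneousComponent i P) := by
  classical
  refine ⟨∑ i ∈ range (P.totalDegree + 1),
    Polynomial.monomial i (eval v (homogeneousComponent i P)), fun t => ?_, fun i => ?_⟩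
  · conv_rhs => rw [← sum_homogeneousComponent P]
    simp only [Polynomial.eval_finsetSum, Polynomial.eval_monomial, map_sum]
    exact sum_congr rfl fun i _ => by
      rw [(homogeneousComponent_isHomogeneous i P).eval_smul, mul_comm]
  · rw [Polynomial.finsetSum_coeff]
    simp only [Polynomial.coeff_monomial, sum_ite_eq', mem_range]
    split_ifs with hi
    · rfl
    · rw [homogeneousComponent_eq_zero _ _ (by omega), map_zero]

theorem totalDegree_le_of_homogeneousComponent_eq_zero {P : MvPolynomial σ R} {N : ℕ}
    (h : ∀ D, N < D → homogeneousComponent D P = 0) : P.totalDegree ≤ N := by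
  rw [← sum_homogeneousComponent P]
  refine (totalDegree_finsetSum _ _).trans (Finset.sup_le fun D _ => ?_)
  rcases le_or_gt D N with hD | hD
  · exact (homogeneousComponent_isHomogeneous D P).totalDegree_le.trans hD
  · rw [h D hD, totalDegree_zero]
    exact N.zero_le

theorem totalDegree_le_of_fwdDiff_iter_eq_zero [Fintype σ] [IsDomain R] [CharZero R]
    {P : MvPolynomial σ R} {N : ℕ} (h : ∀ v, Δ_[v] ^[N + 1] (fun x => eval x P) = 0) :
    P.totalDegree ≤ N := by
  refine totalDegree_le_of_homogeneousComponent_eq_zero fun D hD => ?_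
  refine (homogeneousComponent_isHomogeneous D P).eq_zero_of_forall_eval_eq_zero fun v => ?_
  obtain ⟨A, hAeval, hAcoeff⟩ := exists_polynomial_eval_smul_eq P v
  have hA : A.natDegree ≤ N := by
    refine Polynomial.natDegree_le_of_fwdDiff_iter_eq_zero ?_
    rw [show (fun t => Polynomial.eval t A) = (fun x => eval x P) ∘ fun t => t • v from
      _root_.funext hAeval]
    exact fwdDiff_iter_comp_eq_zero (fun t => add_smul t 1 v ▸ by rw [one_smul]) (h v)
  rw [← hAcoeff]
  exact Polynomial.coeff_eq_zero_of_natDegree_lt (hA.trans_lt hD)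

end MvPolynomial

theorem montel_with_degree_bound {d t : ℕ} (h : Fin t → (Fin d → ℝ))
    (hdense : Dense ((AddSubgroup.closure (Set.range h) : AddSubgroup (Fin d → ℝ)) :
      Set (Fin d → ℝ)))
    (n : Fin t → ℕ) (f : (Fin d → ℝ) → ℝ) (hf : Continuous f)
    (hdiff : ∀ k : Fin t, ∀ x, (fdiff (h k))^[n k + 1] f x = 0) :
    ∃ P : MvPolynomial (Fin d) ℝ,
      P.totalDegree ≤ (∑ i, n i) + t - 1 ∧ ∀ x, f x = MvPolynomial.eval x P := by
  have hgen : ∀ k, Δ_[h k] ^[n k + 1] f = 0 := fun k => funext (hdiff k)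
  have hall : ∀ s, Δ_[s] ^[∑ i, n i + 1] f = 0 :=
    fwdDiff_iter_eq_zero_of_dense hdense hf fun _ hs => fwdDiff_iter_eq_zero_of_mem_closure hgen hs
  obtain ⟨P, hP⟩ := exists_mvPolynomial_eval_eq_of_fwdDiff_iter_eq_zero hf hall
  have hdeg : P.totalDegree ≤ ∑ i, n i := by
    refine MvPolynomial.totalDegree_le_of_fwdDiff_iter_eq_zero fun v => ?_
    rw [← funext hP]
    exact hall v
  refine ⟨P, hdeg.trans ?_, hP⟩
  obtain rfl | ht := t.eq_zero_or_pos
  · simp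
  · omega
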